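/- arXiv:1810.00794 — 4 statements merged into one kernel-verified Lean document; each statement's English description precedes it below -/
import Mathlib

section
/- Let k ≥ 2 and let P_k ⊆ E be the vertex set of the regular 2k-gon inscribed in the unit circle, P_k = {p_j = (cos(jπ/k), sin(jπ/k)) : 0 ≤ j < 2k}. Let R be the configuration of k disks in which the i-th disk (0 ≤ i < k) has center the midpoint of p_{2i} and p_{2i+1} and radius sin(π/(2k)), and let B be the configuration in which the i-th disk has center the midpoint of p_{2i+1} and p_{2i+2 mod 2k} and radius sin(π/(2k)). Then for every continuous morph (γ, ρ) on [0,1] from R to B covering P_k, there exist t ∈ [0,1] and i ∈ Fin k with ρ i t ≥ sin(π/k); equivalently, some disk must grow to at least 2·sin(π(k−1)/(2k)) times the optimal radius sin(π/(2k)). -/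
open Metric Set Real Pointwise

noncomputable section

abbrev E : Type := EuclideanSpace ℝ (Fin 2)

noncomputable def pt (x y : ℝ) : E := !₂[x, y]

/-- A continuous morph on `[0,1]` from configuration `(c0, r0)` to configuration `(c1, r1)`
of `k` balls, covering the point set `P` at all times. -/
def IsMorph {X : Type*} [PseudoMetricSpace X] (k : ℕ) (P : Set X)
    (c0 c1 : Fin k → X) (r0 r1 : Fin k → ℝ)
    (γ : Fin k → ℝ → X) (ρ : Fin k → ℝ → ℝ) : Prop :=
  (∀ i, ContinuousOn (γ i) (Set.Icc 0 1)) ∧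
  (∀ i, ContinuousOn (ρ i) (Set.Icc 0 1)) ∧
  (∀ i, ∀ t ∈ Set.Icc (0:ℝ) 1, 0 ≤ ρ i t) ∧
  (∀ i, γ i 0 = c0 i) ∧
  (∀ i, ρ i 0 = r0 i) ∧
  (∃ σ : Equiv.Perm (Fin k), (∀ i, γ i 1 = c1 (σ i)) ∧ (∀ i, ρ i 1 = r1 (σ i))) ∧
  (∀ t ∈ Set.Icc (0:ℝ) 1, P ⊆ ⋃ i, Metric.closedBall (γ i t) (ρ i t))

/-- The `j`-th vertex of the regular `2k`-gon inscribed in the unit circle. -/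
noncomputable def gonPt (k j : ℕ) : E := !₂[Real.cos (j * π / k), Real.sin (j * π / k)]

/-- The vertex set of the regular `2k`-gon inscribed in the unit circle. -/
def Pgon (k : ℕ) : Set E := {x | ∃ j < 2 * k, x = gonPt k j}

/-!
Suppose every radius stays below `sin (π / k)`, half the distance between two vertices that are
two steps apart. Then a disk covers at most a pair of cyclically adjacent vertices, so at every
time the `k` disks split the `2k` vertices into `k` adjacent pairs, and vertex `1` is paired
either with vertex `0` or with vertex `2`, but not with both. Both alternatives are closed
conditions on the time; the first holds at `t = 0` and the second at `t = 1`, contradicting the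
connectedness of `[0, 1]`.
-/

open scoped Finset

open Finset in
theorem Finset.exists_eq_fiber_of_card_le_of_cover {α β : Type*} [Fintype α] [Fintype β]
    [DecidableEq β] {S : β → Finset α} {n : ℕ} (hα : Fintype.card α = n * Fintype.card β)
    (hS : ∀ i, #(S i) ≤ n) (hcov : ∀ a, ∃ i, a ∈ S i) :
    ∃ f : α → β, ∀ i, #(S i) = n ∧ ∀ a, a ∈ S i ↔ f a = i := by
  choose f hf using hcov
  have hfiber : ∀ i, ({a | f a = i} : Finset α) ⊆ S i :=
    fun i a ha => (mem_filter.1 ha).2 ▸ hf a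
  have hsum : ∑ i, #({a | f a = i} : Finset α) = ∑ _i : β, n := by
    rw [← card_eq_sum_card_fiberwise fun a _ => mem_univ (f a), card_univ, hα, sum_const,
      card_univ, smul_eq_mul, mul_comm]
  have hcard : ∀ i, #({a | f a = i} : Finset α) = n := fun i =>
    (sum_eq_sum_iff_of_le fun i _ => (card_le_card (hfiber i)).trans (hS i)).1 hsum i (mem_univ i)
  refine ⟨f, fun i => ?_⟩
  have hSi := eq_of_subset_of_card_le (hfiber i) ((hS i).trans (hcard i).ge)
  exact ⟨hSi ▸ hcard i, fun a => by simp [← hSi]⟩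

theorem Real.sin_le_sin_of_le_of_le_pi_sub {x y : ℝ} (hy : -(π / 2) ≤ y) (hyx : y ≤ x)
    (hxy : x ≤ π - y) : sin y ≤ sin x := by
  rcases le_total x (π / 2) with hx | hx
  · exact sin_le_sin_of_le_of_le_pi_div_two hy hx hyx
  · rw [← sin_pi_sub x]
    exact sin_le_sin_of_le_of_le_pi_div_two hy (by linarith) (by linarith)

theorem dist_cos_sin (A B : ℝ) :
    dist (!₂[cos A, sin A] : EuclideanSpace ℝ (Fin 2)) !₂[cos B, sin B]
      = 2 * |sin ((A - B) / 2)| := by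
  obtain ⟨u, v, rfl, rfl⟩ : ∃ u v, A = u + v ∧ B = u - v :=
    ⟨(A + B) / 2, (A - B) / 2, by ring, by ring⟩
  rw [show (u + v - (u - v)) / 2 = v by ring, EuclideanSpace.dist_eq,
    ← sqrt_sq (by positivity : 0 ≤ 2 * |sin v|)]
  congr 1
  simp only [Fin.sum_univ_two, Real.dist_eq, sq_abs, mul_pow, Matrix.cons_val_zero,
    Matrix.cons_val_one, Matrix.cons_val_fin_one, cos_add, cos_sub, sin_add, sin_sub]
  linear_combination (4 * sin v ^ 2) * sin_sq_add_cos_sq u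

theorem dist_gonPt (k a b : ℕ) :
    dist (gonPt k a) (gonPt k b) = 2 * |sin ((a - b) * π / (2 * k))| := by
  rw [gonPt, gonPt, dist_cos_sin]
  ring_nf

theorem dist_gonPt_succ {k : ℕ} (hk : 0 < k) (j : ℕ) :
    dist (gonPt k j) (gonPt k (j + 1)) = 2 * sin (π / (2 * k)) := by
  have hk1 : (1 : ℝ) ≤ k := by exact_mod_cast hk
  rw [dist_gonPt, Nat.cast_succ, show ((j : ℝ) - (j + 1)) * π / (2 * k) = -(π / (2 * k)) by ring,
    sin_neg, abs_neg, abs_of_nonneg]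
  exact sin_nonneg_of_nonneg_of_le_pi (by positivity) (div_le_self pi_pos.le (by linarith))

theorem two_sin_pi_div_le_dist_gonPt {k a b : ℕ} (hab : a + 2 ≤ b) (hba : b + 2 ≤ 2 * k + a) :
    2 * sin (π / k) ≤ dist (gonPt k a) (gonPt k b) := by
  have hab : (a : ℝ) + 2 ≤ b := by exact_mod_cast hab
  have hba : (b : ℝ) + 2 ≤ 2 * k + a := by exact_mod_cast hba
  have hk : (0 : ℝ) < k := by linarith
  have hlow : π / k ≤ (b - a) * π / (2 * k) := by
    rw [show π / k = 2 * π / (2 * k) by field_simp]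
    gcongr ?_ * _ / _
    linarith
  have hhigh : (b - a) * π / (2 * k) ≤ π - π / k := by
    rw [show π - π / k = (2 * k - 2) * π / (2 * k) by field_simp]
    gcongr ?_ * _ / _
    linarith
  rw [dist_gonPt, show (a - b : ℝ) * π / (2 * k) = -((b - a) * π / (2 * k)) by ring, sin_neg,
    abs_neg]
  have := sin_le_sin_of_le_of_le_pi_sub (by linarith [pi_pos, div_pos pi_pos hk]) hlow hhigh
  linarith [le_abs_self (sin ((b - a) * π / (2 * k)))]

theorem eq_or_adjacent_of_gonPt_mem_closedBall {k a b : ℕ} {c : E} {r : ℝ}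
    (hr : r < sin (π / k)) (ha : a < 2 * k) (hb : b < 2 * k) (hca : gonPt k a ∈ closedBall c r)
    (hcb : gonPt k b ∈ closedBall c r) :
    -- the last two cases are the wrap-around pair `{2k - 1, 0}`
    a = b ∨ a + 1 = b ∨ b + 1 = a ∨ b + 1 = a + 2 * k ∨ a + 1 = b + 2 * k := by
  rw [mem_closedBall] at hca hcb
  have hclose : dist (gonPt k a) (gonPt k b) < 2 * sin (π / k) := by
    linarith [dist_triangle_right (gonPt k a) (gonPt k b) c]
  by_contra! hfar
  rcases lt_or_gt_of_ne hfar.1 with hab | hba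
  · exact hclose.not_ge (two_sin_pi_div_le_dist_gonPt (by omega) (by omega))
  · rw [dist_comm] at hclose
    exact hclose.not_ge (two_sin_pi_div_le_dist_gonPt (by omega) (by omega))

open Classical in
def gonVerticesIn (k : ℕ) (c : E) (r : ℝ) : Finset (Fin (2 * k)) :=
  {j | gonPt k j ∈ closedBall c r}

theorem mem_gonVerticesIn {k : ℕ} {c : E} {r : ℝ} {j : Fin (2 * k)} :
    j ∈ gonVerticesIn k c r ↔ gonPt k j ∈ closedBall c r := by
  simp [gonVerticesIn]

theorem card_gonVerticesIn_le_two {k : ℕ} (hk : 2 ≤ k) {c : E} {r : ℝ} (hr : r < sin (π / k)) :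
    #(gonVerticesIn k c r) ≤ 2 := by
  by_contra! h
  obtain ⟨x, hx, y, hy, z, hz, hxy, hxz, hyz⟩ := Finset.two_lt_card.1 h
  simp only [mem_gonVerticesIn] at hx hy hz
  have := eq_or_adjacent_of_gonPt_mem_closedBall hr x.isLt y.isLt hx hy
  have := eq_or_adjacent_of_gonPt_mem_closedBall hr x.isLt z.isLt hx hz
  have := eq_or_adjacent_of_gonPt_mem_closedBall hr y.isLt z.isLt hy hz
  omega

def CoversPair {X ι : Type*} [PseudoMetricSpace X] (c : ι → X) (r : ι → ℝ) (x y : X) : Prop :=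
  ∃ i, x ∈ closedBall (c i) (r i) ∧ y ∈ closedBall (c i) (r i)

theorem isClosed_setOf_coversPair {X ι T : Type*} [PseudoMetricSpace X] [Finite ι]
    [TopologicalSpace T] {s : Set T} (hs : IsClosed s) {γ : ι → T → X} {ρ : ι → T → ℝ}
    (hγ : ∀ i, ContinuousOn (γ i) s) (hρ : ∀ i, ContinuousOn (ρ i) s) (x y : X) :
    IsClosed {t ∈ s | CoversPair (γ · t) (ρ · t) x y} := by
  have hball : ∀ z i, IsClosed {t ∈ s | dist z (γ i t) ≤ ρ i t} := fun z i =>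
    hs.isClosed_le ((continuous_const.dist continuous_id).comp_continuousOn (hγ i)) (hρ i)
  convert isClosed_iUnion_of_finite fun i => (hball x i).inter (hball y i) using 1
  ext t
  simp only [CoversPair, mem_closedBall, mem_ofPred_eq, mem_iUnion, mem_inter_iff]
  tauto

theorem gonPt_mem_closedBall_midpoint {k : ℕ} (hk : 0 < k) (j : ℕ) :
    gonPt k j ∈ closedBall (midpoint ℝ (gonPt k j) (gonPt k (j + 1))) (sin (π / (2 * k))) ∧
      gonPt k (j + 1) ∈
        closedBall (midpoint ℝ (gonPt k j) (gonPt k (j + 1))) (sin (π / (2 * k))) := by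
  simp [mem_closedBall, dist_left_midpoint, dist_right_midpoint, dist_gonPt_succ hk]

section Configuration

variable {k : ℕ} (hk : 2 ≤ k) {c : Fin k → E} {r : Fin k → ℝ} (hr : ∀ i, r i < sin (π / k))
  (hcov : Pgon k ⊆ ⋃ i, closedBall (c i) (r i))
include hk hr hcov

theorem exists_eq_fiber_gonVerticesIn :
    ∃ f : Fin (2 * k) → Fin k, ∀ i, #(gonVerticesIn k (c i) (r i)) = 2 ∧
      ∀ j : Fin (2 * k), gonPt k j ∈ closedBall (c i) (r i) ↔ f j = i := by
  simp only [← mem_gonVerticesIn]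
  refine Finset.exists_eq_fiber_of_card_le_of_cover (by simp) (fun i =>
    card_gonVerticesIn_le_two hk (hr i)) fun j => ?_
  obtain ⟨i, hi⟩ := mem_iUnion.1 (hcov ⟨j, j.isLt, rfl⟩)
  exact ⟨i, mem_gonVerticesIn.2 hi⟩

theorem coversPair_zero_one_or_one_two :
    CoversPair c r (gonPt k 0) (gonPt k 1) ∨ CoversPair c r (gonPt k 1) (gonPt k 2) := by
  obtain ⟨f, hf⟩ := exists_eq_fiber_gonVerticesIn hk hr hcov
  let one : Fin (2 * k) := ⟨1, by omega⟩
  obtain ⟨y, hy, hy_ne⟩ := Finset.exists_mem_ne (by rw [(hf (f one)).1]; norm_num) one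
  have hy1 : (y : ℕ) ≠ 1 := fun h => hy_ne (Fin.ext h)
  have hone : gonPt k 1 ∈ closedBall (c (f one)) (r (f one)) := ((hf (f one)).2 one).2 rfl
  rw [mem_gonVerticesIn] at hy
  have := eq_or_adjacent_of_gonPt_mem_closedBall (hr (f one)) y.isLt (by omega) hy hone
  rcases (by omega : (y : ℕ) = 0 ∨ (y : ℕ) = 2) with h0 | h2
  · rw [h0] at hy
    exact Or.inl ⟨f one, hy, hone⟩
  · rw [h2] at hy
    exact Or.inr ⟨f one, hone, hy⟩

theorem not_coversPair_zero_one_and_one_two :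
    ¬ (CoversPair c r (gonPt k 0) (gonPt k 1) ∧ CoversPair c r (gonPt k 1) (gonPt k 2)) := by
  rintro ⟨⟨i, h0, h1⟩, ⟨i', h1', h2⟩⟩
  obtain ⟨f, hf⟩ := exists_eq_fiber_gonVerticesIn hk hr hcov
  let one : Fin (2 * k) := ⟨1, by omega⟩
  obtain rfl : i = i' := (((hf i).2 one).1 h1).symm.trans (((hf i').2 one).1 h1')
  have := eq_or_adjacent_of_gonPt_mem_closedBall (hr i) (by omega) (by omega) h0 h2
  omega

end Configuration

theorem gon_morph_needs_large_radius
    (k : ℕ) (hk : 2 ≤ k)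
    (γ : Fin k → ℝ → E) (ρ : Fin k → ℝ → ℝ)
    (h : IsMorph k (Pgon k)
      (fun i => midpoint ℝ (gonPt k (2 * (i:ℕ))) (gonPt k (2 * (i:ℕ) + 1)))
      (fun i => midpoint ℝ (gonPt k (2 * (i:ℕ) + 1)) (gonPt k ((2 * (i:ℕ) + 2) % (2 * k))))
      (fun _ => Real.sin (π / (2 * k))) (fun _ => Real.sin (π / (2 * k))) γ ρ) :
    ∃ t ∈ Set.Icc (0:ℝ) 1, ∃ i, Real.sin (π / k) ≤ ρ i t := by
  obtain ⟨hγ, hρ, -, hγ0, hρ0, ⟨σ, hγ1, hρ1⟩, hcov⟩ := h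
  by_contra! hsmall
  have hk0 : 0 < k := by omega
  let U := {t ∈ Icc (0 : ℝ) 1 | CoversPair (γ · t) (ρ · t) (gonPt k 0) (gonPt k 1)}
  let V := {t ∈ Icc (0 : ℝ) 1 | CoversPair (γ · t) (ρ · t) (gonPt k 1) (gonPt k 2)}
  have h0U : (0 : ℝ) ∈ U := ⟨left_mem_Icc.2 zero_le_one, ⟨0, hk0⟩, by
    simpa [hγ0, hρ0] using gonPt_mem_closedBall_midpoint hk0 0⟩
  have h1V : (1 : ℝ) ∈ V := ⟨right_mem_Icc.2 zero_le_one, σ.symm ⟨0, hk0⟩, by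
    simpa [hγ1, hρ1, Nat.mod_eq_of_lt (by omega : 2 < 2 * k)] using
      gonPt_mem_closedBall_midpoint hk0 1⟩
  obtain ⟨t, ht, htU, htV⟩ := isPreconnected_closed_iff.1 isPreconnected_Icc U V
    (isClosed_setOf_coversPair isClosed_Icc hγ hρ _ _)
    (isClosed_setOf_coversPair isClosed_Icc hγ hρ _ _)
    (fun t ht => (coversPair_zero_one_or_one_two hk (hsmall t ht) (hcov t ht)).imp
      (⟨ht, ·⟩) (⟨ht, ·⟩))
    ⟨0, left_mem_Icc.2 zero_le_one, h0U⟩ ⟨1, right_mem_Icc.2 zero_le_one, h1V⟩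
  exact not_coversPair_zero_one_and_one_two hk (hsmall t ht) (hcov t ht) ⟨htU.2, htV.2⟩
end
end

section
/- Let E = EuclideanSpace ℝ (Fin 2), let P ⊆ E be a finite point set, let k ≥ 2, and let C ≥ 0. Let R = (c⁰, r⁰) and B = (c¹, r¹) be two configurations of k disks, each covering P, with r⁰ i ≤ C and r¹ i ≤ C for all i. Then there exists a continuous morph (γ, ρ) on [0,1] from R to B covering P such that ρ i t ≤ 2C for all i ∈ Fin k and all t ∈ [0,1]. (Hence the topological stability ratio of the minmax Euclidean k-center problem is at most 2.) -/
open Metric Set Real Pointwise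

noncomputable section

/-! Call the initial disks red and the final ones blue. Take a maximal matching between red and
blue disks that meet, encoded as a permutation `σ` and a set `S` of matched red disks: red `i`
meets blue `σ i` for `i ∈ S`, and a red disk outside `S` meets only blue disks `σ s` with `s ∈ S`.
A disk of radius `2C` centred at a common point of red `i` and blue `σ i` contains both. Moving
centres and radii along straight lines keeps `P` covered whenever each point of `P` lies in the
`i`-th disk at both ends, for some `i`. Three such moves suffice: grow every red disk to radius
`2C`, moving each matched disk `i` to its common point with blue `σ i`; move each unmatched disk `i`
to the centre of blue `σ i`, while by maximality the matched disks hold the points of unmatched red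
disks; shrink to the blue configuration. -/

open AffineMap

theorem exists_perm_finset_maximal_matching {ι : Type*} [Finite ι] (adj : ι → ι → Prop) :
    ∃ (σ : Equiv.Perm ι) (S : Finset ι), (∀ i ∈ S, adj i (σ i)) ∧
      ∀ i ∉ S, ∀ j, adj i j → ∃ s ∈ S, σ s = j := by
  classical
  obtain ⟨⟨σ, S⟩, hσS, hmax⟩ := Set.exists_max_image
    {x : Equiv.Perm ι × Finset ι | ∀ i ∈ x.2, adj i (x.1 i)} (fun x => x.2.card)
    (Set.toFinite _) ⟨(1, ∅), by simp⟩
  refine ⟨σ, S, hσS, fun i hi j hij => ?_⟩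
  by_contra! hj
  set σ' := σ.trans (Equiv.swap (σ i) j)
  have hσ'_eq : ∀ s ∈ S, σ' s = σ s := fun s hs =>
    Equiv.swap_apply_of_ne_of_ne (σ.injective.ne (ne_of_mem_of_not_mem hs hi)) (hj s hs)
  have hσ'S : ∀ s ∈ insert i S, adj s (σ' s) := by
    simp only [Finset.forall_mem_insert]
    exact ⟨by simpa [σ'] using hij, fun s hs => hσ'_eq s hs ▸ hσS s hs⟩
  have := hmax (σ', insert i S) hσ'S
  simp [Finset.card_insert_of_notMem hi] at this

section Morph

variable {ι X : Type*} [PseudoMetricSpace X]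

-- Continuity on all of `ℝ`, rather than on `[0, 1]`, makes concatenation easy.
def IsBoundedMorph (P : Set X) (R : ℝ) (c0 : ι → X) (r0 : ι → ℝ) (c1 : ι → X) (r1 : ι → ℝ) :
    Prop :=
  ∃ (γ : ι → ℝ → X) (ρ : ι → ℝ → ℝ), (∀ i, Continuous (γ i)) ∧ (∀ i, Continuous (ρ i)) ∧
    (∀ i, ∀ t ∈ Icc (0 : ℝ) 1, ρ i t ∈ Icc 0 R) ∧
    (∀ i, γ i 0 = c0 i ∧ ρ i 0 = r0 i) ∧ (∀ i, γ i 1 = c1 i ∧ ρ i 1 = r1 i) ∧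
    ∀ t ∈ Icc (0 : ℝ) 1, P ⊆ ⋃ i, closedBall (γ i t) (ρ i t)

theorem IsBoundedMorph.trans {P : Set X} {R : ℝ} {c0 c1 c2 : ι → X} {r0 r1 r2 : ι → ℝ}
    (h₁ : IsBoundedMorph P R c0 r0 c1 r1) (h₂ : IsBoundedMorph P R c1 r1 c2 r2) :
    IsBoundedMorph P R c0 r0 c2 r2 := by
  classical
  obtain ⟨γ₁, ρ₁, hγ₁, hρ₁, hR₁, h0₁, h1₁, hP₁⟩ := h₁
  obtain ⟨γ₂, ρ₂, hγ₂, hρ₂, hR₂, h0₂, h1₂, hP₂⟩ := h₂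
  have first_half {t : ℝ} (ht : t ∈ Icc (0 : ℝ) 1) (h : t ≤ 1 / 2) : 2 * t ∈ Icc (0 : ℝ) 1 :=
    ⟨by linarith [ht.1], by linarith⟩
  have second_half {t : ℝ} (ht : t ∈ Icc (0 : ℝ) 1) (h : ¬t ≤ 1 / 2) :
      2 * t - 1 ∈ Icc (0 : ℝ) 1 := ⟨by linarith, by linarith [ht.2]⟩
  refine ⟨fun i t => if t ≤ 1 / 2 then γ₁ i (2 * t) else γ₂ i (2 * t - 1),
    fun i t => if t ≤ 1 / 2 then ρ₁ i (2 * t) else ρ₂ i (2 * t - 1),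
    fun i => Continuous.if_le ((hγ₁ i).comp (by fun_prop)) ((hγ₂ i).comp (by fun_prop))
      continuous_id continuous_const fun t ht => by norm_num [ht, (h1₁ i).1, (h0₂ i).1],
    fun i => Continuous.if_le ((hρ₁ i).comp (by fun_prop)) ((hρ₂ i).comp (by fun_prop))
      continuous_id continuous_const fun t ht => by norm_num [ht, (h1₁ i).2, (h0₂ i).2],
    fun i t ht => ?_, fun i => by norm_num [h0₁ i], fun i => by norm_num [h1₂ i],
    fun t ht => ?_⟩
  · dsimp only
    split_ifs with h
    exacts [hR₁ i _ (first_half ht h), hR₂ i _ (second_half ht h)]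
  · dsimp only
    split_ifs with h
    exacts [hP₁ _ (first_half ht h), hP₂ _ (second_half ht h)]

theorem closedBall_subset_closedBall_two_mul {c x : X} {r C : ℝ} (hx : x ∈ closedBall c r)
    (hr : r ≤ C) : closedBall c r ⊆ closedBall x (2 * C) :=
  closedBall_subset_closedBall' (by linarith [mem_closedBall'.1 hx])

theorem closedBall_subset_closedBall_piecewise_two_mul {S : Finset ι}
    [∀ i, Decidable (i ∈ S)] {q c : ι → X} {r : ι → ℝ} {C : ℝ}
    (hq : ∀ i ∈ S, q i ∈ closedBall (c i) (r i)) (hr : ∀ i, 0 ≤ r i) (hC : ∀ i, r i ≤ C)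
    (i : ι) : closedBall (c i) (r i) ⊆ closedBall (S.piecewise q c i) (2 * C) := by
  by_cases hi : i ∈ S
  · simpa [hi] using closedBall_subset_closedBall_two_mul (hq i hi) (hC i)
  · simpa [hi] using closedBall_subset_closedBall_two_mul (mem_closedBall_self (hr i)) (hC i)

end Morph

section Linear

variable {V : Type*} [SeminormedAddCommGroup V] [NormedSpace ℝ V]

theorem mem_closedBall_lineMap {p x y : V} {r s t : ℝ} (hx : p ∈ closedBall x r)
    (hy : p ∈ closedBall y s) (ht : t ∈ Icc (0 : ℝ) 1) :
    p ∈ closedBall (lineMap x y t) (lineMap r s t) := by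
  rw [mem_closedBall'] at hx hy ⊢
  rw [lineMap_apply_module, lineMap_apply_module, smul_eq_mul, smul_eq_mul]
  calc dist ((1 - t) • x + t • y) p ≤ (1 - t) * dist x p + t * dist y p :=
        (convexOn_univ_dist p).2 trivial trivial (by linarith [ht.2]) ht.1 (by ring)
    _ ≤ (1 - t) * r + t * s := by gcongr <;> linarith [ht.1, ht.2]

theorem isBoundedMorph_lineMap {ι : Type*} {P : Set V} {R : ℝ} {c0 c1 : ι → V} {r0 r1 : ι → ℝ}
    (hr0 : ∀ i, r0 i ∈ Icc 0 R) (hr1 : ∀ i, r1 i ∈ Icc 0 R)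
    (hP : ∀ p ∈ P, ∃ i, p ∈ closedBall (c0 i) (r0 i) ∧ p ∈ closedBall (c1 i) (r1 i)) :
    IsBoundedMorph P R c0 r0 c1 r1 := by
  refine ⟨fun i => lineMap (c0 i) (c1 i), fun i => lineMap (r0 i) (r1 i),
    fun i => lineMap_continuous, fun i => lineMap_continuous,
    fun i t ht => (convex_Icc 0 R).lineMap_mem (hr0 i) (hr1 i) ht, by simp, by simp,
    fun t ht p hp => ?_⟩
  obtain ⟨i, hp0, hp1⟩ := hP p hp
  exact mem_iUnion.2 ⟨i, mem_closedBall_lineMap hp0 hp1 ht⟩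

theorem exists_perm_isBoundedMorph_two_mul {ι : Type*} [Finite ι] {P : Set V} {C : ℝ}
    {c0 c1 : ι → V} {r0 r1 : ι → ℝ} (hr0 : ∀ i, 0 ≤ r0 i) (hr1 : ∀ i, 0 ≤ r1 i)
    (h0 : P ⊆ ⋃ i, closedBall (c0 i) (r0 i)) (h1 : P ⊆ ⋃ i, closedBall (c1 i) (r1 i))
    (hb0 : ∀ i, r0 i ≤ C) (hb1 : ∀ i, r1 i ≤ C) :
    ∃ σ : Equiv.Perm ι, IsBoundedMorph P (2 * C) c0 r0 (c1 ∘ σ) (r1 ∘ σ) := by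
  classical
  obtain ⟨σ, S, hS, hmax⟩ := exists_perm_finset_maximal_matching fun i j =>
    (closedBall (c0 i) (r0 i) ∩ closedBall (c1 j) (r1 j)).Nonempty
  choose! q hq using hS
  set x0 := S.piecewise q c0
  set x1 := S.piecewise q (c1 ∘ σ)
  have hx0 : ∀ i, closedBall (c0 i) (r0 i) ⊆ closedBall (x0 i) (2 * C) :=
    closedBall_subset_closedBall_piecewise_two_mul (fun i hi => (hq i hi).1) hr0 hb0
  have hx1 : ∀ i, closedBall (c1 (σ i)) (r1 (σ i)) ⊆ closedBall (x1 i) (2 * C) :=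
    closedBall_subset_closedBall_piecewise_two_mul (c := c1 ∘ σ) (r := r1 ∘ σ)
      (fun i hi => (hq i hi).2) (fun i => hr1 (σ i)) fun i => hb1 (σ i)
  have hR0 : ∀ i, r0 i ∈ Icc 0 (2 * C) := fun i => ⟨hr0 i, by linarith [hr0 i, hb0 i]⟩
  have hR1 : ∀ i, r1 (σ i) ∈ Icc 0 (2 * C) := fun i => ⟨hr1 _, by linarith [hr1 (σ i), hb1 (σ i)]⟩
  have hR : ∀ i : ι, 2 * C ∈ Icc 0 (2 * C) := fun i => ⟨by linarith [hr0 i, hb0 i], le_rfl⟩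
  have step0 : IsBoundedMorph P (2 * C) c0 r0 x0 fun _ => 2 * C := by
    refine isBoundedMorph_lineMap hR0 hR fun p hp => ?_
    obtain ⟨i, hi⟩ := mem_iUnion.1 (h0 hp)
    exact ⟨i, hi, hx0 i hi⟩
  have step1 : IsBoundedMorph P (2 * C) x0 (fun _ => 2 * C) x1 fun _ => 2 * C := by
    refine isBoundedMorph_lineMap hR hR fun p hp => ?_
    obtain ⟨i, hi⟩ := mem_iUnion.1 (h0 hp)
    by_cases hiS : i ∈ S
    · exact ⟨i, hx0 i hi, by simpa [x0, x1, hiS] using hx0 i hi⟩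
    obtain ⟨j, hj⟩ := mem_iUnion.1 (h1 hp)
    obtain ⟨s, hs, rfl⟩ := hmax i hiS j ⟨p, hi, hj⟩
    exact ⟨s, by simpa [x0, x1, hs] using hx1 s hj, hx1 s hj⟩
  have step2 : IsBoundedMorph P (2 * C) x1 (fun _ => 2 * C) (c1 ∘ σ) (r1 ∘ σ) := by
    refine isBoundedMorph_lineMap hR hR1 fun p hp => ?_
    obtain ⟨j, hj⟩ := mem_iUnion.1 (h1 hp)
    refine ⟨σ.symm j, hx1 _ ?_, ?_⟩ <;> simpa using hj
  exact ⟨σ, (step0.trans step1).trans step2⟩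

end Linear

theorem minmax_euclidean_morph_factor_two_general
    (k : ℕ) (P : Set E) (C : ℝ)
    (c0 c1 : Fin k → E) (r0 r1 : Fin k → ℝ)
    (hr0 : ∀ i, 0 ≤ r0 i) (hr1 : ∀ i, 0 ≤ r1 i)
    (h0 : P ⊆ ⋃ i, Metric.closedBall (c0 i) (r0 i))
    (h1 : P ⊆ ⋃ i, Metric.closedBall (c1 i) (r1 i))
    (hb0 : ∀ i, r0 i ≤ C) (hb1 : ∀ i, r1 i ≤ C) :
    ∃ γ ρ, IsMorph k P c0 c1 r0 r1 γ ρ ∧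
      ∀ i, ∀ t ∈ Set.Icc (0:ℝ) 1, ρ i t ≤ 2 * C := by
  obtain ⟨σ, γ, ρ, hγ, hρ, hR, hstart, hend, hP⟩ :=
    exists_perm_isBoundedMorph_two_mul hr0 hr1 h0 h1 hb0 hb1
  exact ⟨γ, ρ, ⟨fun i => (hγ i).continuousOn, fun i => (hρ i).continuousOn,
    fun i t ht => (hR i t ht).1, fun i => (hstart i).1, fun i => (hstart i).2,
    ⟨σ, fun i => (hend i).1, fun i => (hend i).2⟩, hP⟩, fun i t ht => (hR i t ht).2⟩

theorem minmax_euclidean_morph_factor_two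
    (k : ℕ) (hk : 2 ≤ k) (P : Set E) (hP : P.Finite) (C : ℝ) (hC : 0 ≤ C)
    (c0 c1 : Fin k → E) (r0 r1 : Fin k → ℝ)
    (hr0 : ∀ i, 0 ≤ r0 i) (hr1 : ∀ i, 0 ≤ r1 i)
    (h0 : P ⊆ ⋃ i, Metric.closedBall (c0 i) (r0 i))
    (h1 : P ⊆ ⋃ i, Metric.closedBall (c1 i) (r1 i))
    (hb0 : ∀ i, r0 i ≤ C) (hb1 : ∀ i, r1 i ≤ C) :
    ∃ γ ρ, IsMorph k P c0 c1 r0 r1 γ ρ ∧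
      ∀ i, ∀ t ∈ Set.Icc (0:ℝ) 1, ρ i t ≤ 2 * C :=
  minmax_euclidean_morph_factor_two_general k P C c0 c1 r0 r1 hr0 hr1 h0 h1 hb0 hb1
end
end

section
/- For every k ≥ 2 there exist a finite point set P ⊆ E = EuclideanSpace ℝ (Fin 2) and two configurations R and B of k disks, each covering P with total radius (sum of radii) equal to 1/2, such that (i) every configuration of k disks covering P has total radius at least 1/2 (R and B are optimal), and (ii) for every continuous morph (γ, ρ) on [0,1] from R to B covering P there exists t ∈ [0,1] with ∑ i, ρ i t ≥ 1. (Hence the topological stability ratio of the minsum Euclidean k-center problem is at least 2 for every k ≥ 2.) -/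
open Metric Set Real Pointwise

noncomputable section

/-! The points are `q i = (2i, 0)` for `i < k`, pairwise at distance `≥ 2`, and `y = (1, 0)`, at
distance `1` from `q 0` and `q 1` and `≥ 3` from the other `q i`. Of `k + 1` points covered by `k`
disks two share a disk, so some radius is at least `1/2`; if the total radius is below `1`, the
shared pair must be `{y, q 0}` or `{y, q 1}`. The two optimal configurations cover these pairs by a
disk of radius `1/2`. Along a morph of total radius `< 1`, the times at which `{y, q 0}`, resp.
`{y, q 1}`, lies in a single disk form two closed sets covering `[0, 1]`, so by connectedness both
pairs are covered at a common time: either by one disk containing `q 0` and `q 1`, of radius `≥ 1`,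
or by two disks of radius `≥ 1/2` each. -/

lemma Fintype.exists_ne_mem_of_card_lt {α ι κ : Type*} [Fintype ι] [Fintype κ] (p : ι → α)
    (U : κ → Set α) (hcard : Fintype.card κ < Fintype.card ι) (hcov : ∀ a, ∃ i, p a ∈ U i) :
    ∃ a b, a ≠ b ∧ ∃ i, p a ∈ U i ∧ p b ∈ U i := by
  choose g hg using hcov
  obtain ⟨a, b, hab, hgab⟩ := Fintype.exists_ne_map_eq_of_card_lt g hcard
  exact ⟨a, b, hab, g a, hg a, hgab ▸ hg b⟩

section PairCovered

variable {X ι : Type*} [PseudoMetricSpace X]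

def PairCovered (c : ι → X) (r : ι → ℝ) (x y : X) : Prop :=
  ∃ i, x ∈ closedBall (c i) (r i) ∧ y ∈ closedBall (c i) (r i)

lemma dist_le_two_mul_of_mem_closedBall {x y c : X} {r : ℝ} (hx : x ∈ closedBall c r)
    (hy : y ∈ closedBall c r) : dist x y ≤ 2 * r := by
  rw [mem_closedBall] at hx hy
  linarith [dist_triangle_right x y c]

lemma PairCovered.dist_le_two_mul_sum [Fintype ι] {c : ι → X} {r : ι → ℝ} {x y : X}
    (h : PairCovered c r x y) (hr : ∀ i, 0 ≤ r i) : dist x y ≤ 2 * ∑ i, r i := by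
  obtain ⟨i, hx, hy⟩ := h
  calc dist x y ≤ 2 * r i := dist_le_two_mul_of_mem_closedBall hx hy
    _ ≤ 2 * ∑ j, r j := by
      gcongr
      exact Finset.single_le_sum (fun j _ ↦ hr j) (Finset.mem_univ i)

lemma one_le_sum_of_pairCovered [Fintype ι] {c : ι → X} {r : ι → ℝ} {x y z : X}
    (hr : ∀ i, 0 ≤ r i) (hyx : 1 ≤ dist y x) (hyz : 1 ≤ dist y z) (hxz : 2 ≤ dist x z)
    (hx : PairCovered c r y x) (hz : PairCovered c r y z) : 1 ≤ ∑ i, r i := by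
  obtain ⟨i, hyi, hxi⟩ := hx
  obtain ⟨j, hyj, hzj⟩ := hz
  rcases eq_or_ne i j with rfl | hij
  · linarith [PairCovered.dist_le_two_mul_sum ⟨i, hxi, hzj⟩ hr]
  · linarith [Finset.add_le_sum (fun l _ ↦ hr l) (Finset.mem_univ i) (Finset.mem_univ j) hij,
      dist_le_two_mul_of_mem_closedBall hyi hxi, dist_le_two_mul_of_mem_closedBall hyj hzj]

lemma pairCovered_or_of_subset_iUnion [Fintype ι] {c q : ι → X} {r : ι → ℝ} {y : X}
    (hcov : insert y (range q) ⊆ ⋃ i, closedBall (c i) (r i)) :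
    (∃ j, PairCovered c r y (q j)) ∨ ∃ j j', j ≠ j' ∧ PairCovered c r (q j) (q j') := by
  have hmem (a : Option ι) : ∃ i, a.elim y q ∈ closedBall (c i) (r i) :=
    mem_iUnion.1 (hcov (by cases a <;> simp))
  obtain ⟨a, b, hab, i, ha, hb⟩ :=
    Fintype.exists_ne_mem_of_card_lt _ _ (by simp) hmem
  rcases a with _ | j <;> rcases b with _ | j'
  · exact absurd rfl hab
  · exact .inl ⟨j', i, ha, hb⟩
  · exact .inl ⟨j, i, hb, ha⟩
  · exact .inr ⟨j, j', Option.some_injective _ |>.ne_iff.1 hab, i, ha, hb⟩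

variable [Fintype ι] {q : ι → X} {y : X}

lemma half_le_sum_of_subset_iUnion (hq : Pairwise fun j j' ↦ 1 ≤ dist (q j) (q j'))
    (hy : ∀ j, 1 ≤ dist y (q j)) {c : ι → X} {r : ι → ℝ} (hr : ∀ i, 0 ≤ r i)
    (hcov : insert y (range q) ⊆ ⋃ i, closedBall (c i) (r i)) : 1 / 2 ≤ ∑ i, r i := by
  rcases pairCovered_or_of_subset_iUnion hcov with ⟨j, h⟩ | ⟨j, j', hjj', h⟩
  · linarith [h.dist_le_two_mul_sum hr, hy j]
  · linarith [h.dist_le_two_mul_sum hr, hq hjj']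

lemma pairCovered_of_sum_lt_one (hq : Pairwise fun j j' ↦ 2 ≤ dist (q j) (q j')) {a b : ι}
    (hy : ∀ j, j ≠ a → j ≠ b → 2 ≤ dist y (q j)) {c : ι → X} {r : ι → ℝ} (hr : ∀ i, 0 ≤ r i)
    (hcov : insert y (range q) ⊆ ⋃ i, closedBall (c i) (r i)) (hsum : ∑ i, r i < 1) :
    PairCovered c r y (q a) ∨ PairCovered c r y (q b) := by
  rcases pairCovered_or_of_subset_iUnion hcov with ⟨j, h⟩ | ⟨j, j', hjj', h⟩
  · rcases eq_or_ne j a with rfl | ha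
    · exact .inl h
    rcases eq_or_ne j b with rfl | hb
    · exact .inr h
    linarith [h.dist_le_two_mul_sum hr, hy j ha hb]
  · linarith [h.dist_le_two_mul_sum hr, hq hjj']

end PairCovered

section Morph

variable {X T : Type*} [PseudoMetricSpace X] [TopologicalSpace T]

lemma isClosed_inter_setOf_mem_closedBall {s : Set T} {γ : T → X} {ρ : T → ℝ}
    (hs : IsClosed s) (hγ : ContinuousOn γ s) (hρ : ContinuousOn ρ s) (x : X) :
    IsClosed (s ∩ {t | x ∈ closedBall (γ t) (ρ t)}) :=
  (((continuous_const.dist continuous_id).comp_continuousOn hγ).prodMk hρ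
    ).preimage_isClosed_of_isClosed hs (isClosed_le continuous_fst continuous_snd)

lemma isClosed_inter_setOf_pairCovered {ι : Type*} [Finite ι] {s : Set T} {γ : ι → T → X}
    {ρ : ι → T → ℝ} (hs : IsClosed s) (hγ : ∀ i, ContinuousOn (γ i) s)
    (hρ : ∀ i, ContinuousOn (ρ i) s) (x y : X) :
    IsClosed (s ∩ {t | PairCovered (γ · t) (ρ · t) x y}) := by
  have hunion : s ∩ {t | PairCovered (γ · t) (ρ · t) x y} =
      ⋃ i, (s ∩ {t | x ∈ closedBall (γ i t) (ρ i t)}) ∩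
        (s ∩ {t | y ∈ closedBall (γ i t) (ρ i t)}) := by
    ext t
    simp only [PairCovered, mem_inter_iff, mem_ofPred_eq, mem_iUnion]
    tauto
  rw [hunion]
  exact isClosed_iUnion_of_finite fun i ↦
    (isClosed_inter_setOf_mem_closedBall hs (hγ i) (hρ i) x).inter
      (isClosed_inter_setOf_mem_closedBall hs (hγ i) (hρ i) y)

theorem IsMorph.exists_one_le_sum {k : ℕ} {P : Set X} {c0 c1 : Fin k → X} {r0 r1 : Fin k → ℝ}
    {γ : Fin k → ℝ → X} {ρ : Fin k → ℝ → ℝ} (hm : IsMorph k P c0 c1 r0 r1 γ ρ) {x y z : X}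
    (hyx : 1 ≤ dist y x) (hyz : 1 ≤ dist y z) (hxz : 2 ≤ dist x z)
    (hP : ∀ (c : Fin k → X) (r : Fin k → ℝ), (∀ i, 0 ≤ r i) →
      P ⊆ ⋃ i, closedBall (c i) (r i) → ∑ i, r i < 1 → PairCovered c r y x ∨ PairCovered c r y z)
    (h0 : PairCovered c0 r0 y x) (h1 : PairCovered c1 r1 y z) :
    ∃ t ∈ Icc (0 : ℝ) 1, 1 ≤ ∑ i, ρ i t := by
  obtain ⟨hγ, hρ, hρ_nonneg, hγ0, hρ0, ⟨σ, hγ1, hρ1⟩, hcov⟩ := hm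
  by_contra! hlt
  set A := Icc (0 : ℝ) 1 ∩ {t | PairCovered (γ · t) (ρ · t) y x}
  set B := Icc (0 : ℝ) 1 ∩ {t | PairCovered (γ · t) (ρ · t) y z}
  have hAB : Icc (0 : ℝ) 1 ⊆ A ∪ B := fun t ht ↦
    (hP _ _ (hρ_nonneg · t ht) (hcov t ht) (hlt t ht)).imp (⟨ht, ·⟩) (⟨ht, ·⟩)
  have hA0 : PairCovered (γ · 0) (ρ · 0) y x := by simpa only [hγ0, hρ0] using h0
  have hB1 : PairCovered (γ · 1) (ρ · 1) y z := by
    obtain ⟨i, hyi, hzi⟩ := h1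
    exact ⟨σ.symm i, by simpa only [hγ1, hρ1, σ.apply_symm_apply] using And.intro hyi hzi⟩
  obtain ⟨t, ht, ⟨-, htA⟩, ⟨-, htB⟩⟩ := isPreconnected_closed_iff.1 isPreconnected_Icc A B
    (isClosed_inter_setOf_pairCovered isClosed_Icc hγ hρ y x)
    (isClosed_inter_setOf_pairCovered isClosed_Icc hγ hρ y z) hAB
    ⟨0, unitInterval.zero_mem, unitInterval.zero_mem, hA0⟩
    ⟨1, unitInterval.one_mem, unitInterval.one_mem, hB1⟩
  exact (hlt t ht).not_ge <|
    one_le_sum_of_pairCovered (hρ_nonneg · t ht) hyx hyz hxz htA htB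

end Morph

section Configuration

variable {X ι : Type*} [PseudoMetricSpace X] [DecidableEq ι] {q : ι → X} {y m : X} {a : ι}
  {s : ℝ}

lemma insert_range_subset_iUnion_closedBall_update (hy : y ∈ closedBall m s)
    (hq : q a ∈ closedBall m s) :
    insert y (range q) ⊆
      ⋃ i, closedBall (Function.update q a m i) ((Pi.single a s : ι → ℝ) i) := by
  rintro _ (rfl | ⟨j, rfl⟩)
  · exact mem_iUnion.2 ⟨a, by simpa using hy⟩
  · rcases eq_or_ne j a with rfl | hj
    · exact mem_iUnion.2 ⟨j, by simpa using hq⟩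
    · exact mem_iUnion.2 ⟨j, by simp [hj]⟩

lemma pairCovered_update (hy : y ∈ closedBall m s) (hq : q a ∈ closedBall m s) :
    PairCovered (Function.update q a m) (Pi.single a s : ι → ℝ) y (q a) :=
  ⟨a, by simpa using hy, by simpa using hq⟩

end Configuration

lemma dist_pt_zero (u v : ℝ) : dist (pt u 0) (pt v 0) = |u - v| := by
  simp [EuclideanSpace.dist_eq, pt, Fin.sum_univ_two, Real.dist_eq, Real.sqrt_sq_eq_abs]

lemma two_le_dist_pt_two_mul {m n : ℕ} (h : m ≠ n) :
    2 ≤ dist (pt (2 * m) 0) (pt (2 * n) 0) := by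
  rw [dist_pt_zero, le_abs]
  rcases h.lt_or_gt with h | h
  · have : (m : ℝ) + 1 ≤ n := by exact_mod_cast h
    right; linarith
  · have : (n : ℝ) + 1 ≤ m := by exact_mod_cast h
    left; linarith

lemma one_le_dist_pt_one_pt_two_mul (n : ℕ) : 1 ≤ dist (pt 1 0) (pt (2 * n) 0) := by
  rw [dist_pt_zero, le_abs]
  rcases n.eq_zero_or_pos with rfl | hn
  · norm_num
  · have : (1 : ℝ) ≤ n := by exact_mod_cast hn
    right; linarith

lemma two_le_dist_pt_one_pt_two_mul {n : ℕ} (hn : 2 ≤ n) :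
    2 ≤ dist (pt 1 0) (pt (2 * n) 0) := by
  have : (2 : ℝ) ≤ n := by exact_mod_cast hn
  rw [dist_pt_zero, le_abs]
  right; linarith

theorem minsum_euclidean_k_center_lower_bound
    (k : ℕ) (hk : 2 ≤ k) :
    ∃ (P : Set E) (_ : P.Finite) (c0 c1 : Fin k → E) (r0 r1 : Fin k → ℝ),
      (∀ i, 0 ≤ r0 i) ∧ (∀ i, 0 ≤ r1 i) ∧
      (P ⊆ ⋃ i, Metric.closedBall (c0 i) (r0 i)) ∧
      (P ⊆ ⋃ i, Metric.closedBall (c1 i) (r1 i)) ∧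
      (∑ i, r0 i) = 1/2 ∧ (∑ i, r1 i) = 1/2 ∧
      (∀ (c : Fin k → E) (r : Fin k → ℝ), (∀ i, 0 ≤ r i) →
        P ⊆ (⋃ i, Metric.closedBall (c i) (r i)) → (1:ℝ)/2 ≤ ∑ i, r i) ∧
      (∀ γ ρ, IsMorph k P c0 c1 r0 r1 γ ρ →
        ∃ t ∈ Set.Icc (0:ℝ) 1, (1:ℝ) ≤ ∑ i, ρ i t) := by
  let a : Fin k := ⟨0, by omega⟩
  let b : Fin k := ⟨1, hk⟩
  let q : Fin k → E := fun i ↦ pt (2 * (i : ℕ)) 0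
  let y : E := pt 1 0
  have hq : Pairwise fun i j ↦ 2 ≤ dist (q i) (q j) := fun i j h ↦
    two_le_dist_pt_two_mul (Fin.val_injective.ne h)
  have hy : ∀ j, j ≠ a → j ≠ b → 2 ≤ dist y (q j) := fun j ha hb ↦
    two_le_dist_pt_one_pt_two_mul (by simp [a, b, Fin.ext_iff] at ha hb; omega)
  have ha : y ∈ closedBall (pt (1 / 2) 0) (1 / 2) ∧ q a ∈ closedBall (pt (1 / 2) 0) (1 / 2) := by
    norm_num [y, q, a, dist_pt_zero, abs_of_pos]
  have hb : y ∈ closedBall (pt (3 / 2) 0) (1 / 2) ∧ q b ∈ closedBall (pt (3 / 2) 0) (1 / 2) := by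
    norm_num [y, q, b, dist_pt_zero, abs_of_pos]
  have hr (j : Fin k) : 0 ≤ (Pi.single j (1 / 2) : Fin k → ℝ) := Pi.single_nonneg.2 (by norm_num)
  refine ⟨insert y (range q), (finite_range q).insert y,
    Function.update q a (pt (1 / 2) 0), Function.update q b (pt (3 / 2) 0),
    (Pi.single a (1 / 2) : Fin k → ℝ), (Pi.single b (1 / 2) : Fin k → ℝ), hr a, hr b,
    insert_range_subset_iUnion_closedBall_update ha.1 ha.2,
    insert_range_subset_iUnion_closedBall_update hb.1 hb.2,
    Fintype.sum_pi_single' _ _, Fintype.sum_pi_single' _ _, ?_, ?_⟩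
  · exact fun c r hr hcov ↦ half_le_sum_of_subset_iUnion (hq.mono fun _ _ h ↦ by linarith)
      (fun j ↦ one_le_dist_pt_one_pt_two_mul j) hr hcov
  · intro γ ρ hm
    have hya : 1 ≤ dist y (q a) := one_le_dist_pt_one_pt_two_mul 0
    have hyb : 1 ≤ dist y (q b) := one_le_dist_pt_one_pt_two_mul 1
    have hab : 2 ≤ dist (q a) (q b) := hq (by simp [a, b, Fin.ext_iff])
    exact hm.exists_one_le_sum hya hyb hab
      (fun c r hr hcov ↦ pairCovered_of_sum_lt_one hq hy hr hcov)
      (pairCovered_update ha.1 ha.2) (pairCovered_update hb.1 hb.2)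
end
end

section
/- Let E = EuclideanSpace ℝ (Fin 2) and let P₄ = {(1,0), (0,1), (−1,0), (0,−1)} ⊆ E be the vertex set of a square inscribed in the unit circle. Let R be the configuration of 2 disks of radius √2/2 centered at the midpoints of the pairs {(1,0),(0,1)} and {(−1,0),(0,−1)}, and let B be the configuration of 2 disks of radius √2/2 centered at the midpoints of the pairs {(0,1),(−1,0)} and {(0,−1),(1,0)}; both cover P₄ and are optimal. Then for every continuous morph (γ, ρ) on [0,1] from R to B covering P₄, there exist t ∈ [0,1] and i ∈ Fin 2 with ρ i t ≥ 1 = √2 · (√2/2). (This is the lower-bound half of the theorem that the topological stability ratio of the minmax Euclidean 2-center problem equals √2.) -/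
open Metric Set Real Pointwise

noncomputable section

/-!
If all radii stayed below `1`, no disk could contain two antipodal points of the square, so as
long as two disks cover `P₄` no point of `P₄` lies in both. The slack difference
`(dist p c₀ - r₀) - (dist p c₁ - r₁)` therefore never vanishes, and by the intermediate value
theorem each point of `P₄` stays in the disk that contained it at time `0`. But `(1,0)` and `(0,1)`
share a disk of `R` and lie in different disks of `B`.
-/

theorem dist_sub_ne_dist_sub_of_two_mul_lt_dist {X : Type*} [PseudoMetricSpace X]
    {p q c₀ c₁ : X} {r₀ r₁ : ℝ}
    (hp : p ∈ closedBall c₀ r₀ ∪ closedBall c₁ r₁) (hq : q ∈ closedBall c₀ r₀ ∪ closedBall c₁ r₁)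
    (h₀ : 2 * r₀ < dist p q) (h₁ : 2 * r₁ < dist p q) :
    dist p c₀ - r₀ ≠ dist p c₁ - r₁ := by
  intro hslack
  simp only [mem_union, mem_closedBall] at hp hq
  have hp₀ : dist p c₀ ≤ r₀ := by rcases hp with hp | hp <;> linarith
  have hp₁ : dist p c₁ ≤ r₁ := by rcases hp with hp | hp <;> linarith
  rcases hq with hq | hq
  · linarith [dist_triangle_right p q c₀]
  · linarith [dist_triangle_right p q c₁]

theorem mem_closedBall_of_isPreconnected {X T : Type*} [PseudoMetricSpace X]
    [TopologicalSpace T] {p q : X} {c₀ c₁ : T → X} {r₀ r₁ : T → ℝ} {S : Set T} {a b : T}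
    (hS : IsPreconnected S) (ha : a ∈ S) (hb : b ∈ S)
    (hc₀ : ContinuousOn c₀ S) (hc₁ : ContinuousOn c₁ S)
    (hr₀ : ContinuousOn r₀ S) (hr₁ : ContinuousOn r₁ S)
    (hp : ∀ t ∈ S, p ∈ closedBall (c₀ t) (r₀ t) ∪ closedBall (c₁ t) (r₁ t))
    (hq : ∀ t ∈ S, q ∈ closedBall (c₀ t) (r₀ t) ∪ closedBall (c₁ t) (r₁ t))
    (hsmall₀ : ∀ t ∈ S, 2 * r₀ t < dist p q) (hsmall₁ : ∀ t ∈ S, 2 * r₁ t < dist p q)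
    (hpa₀ : p ∈ closedBall (c₀ a) (r₀ a)) (hpa₁ : p ∉ closedBall (c₁ a) (r₁ a)) :
    p ∈ closedBall (c₀ b) (r₀ b) := by
  by_contra hpb₀
  have hpb₁ : p ∈ closedBall (c₁ b) (r₁ b) := (hp b hb).resolve_left hpb₀
  rw [mem_closedBall, not_le] at hpa₁ hpb₀
  rw [mem_closedBall] at hpa₀ hpb₁
  obtain ⟨t, ht, hslack⟩ := hS.intermediate_value₂ ha hb
    (f := fun t => dist p (c₀ t) - r₀ t) (g := fun t => dist p (c₁ t) - r₁ t)
    (((continuous_const.dist continuous_id).comp_continuousOn hc₀).sub hr₀)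
    (((continuous_const.dist continuous_id).comp_continuousOn hc₁).sub hr₁)
    (by linarith) (by linarith)
  exact dist_sub_ne_dist_sub_of_two_mul_lt_dist (hp t ht) (hq t ht)
    (hsmall₀ t ht) (hsmall₁ t ht) hslack

theorem IsMorph.mem_closedBall_of_two_mul_lt_dist {X : Type*} [PseudoMetricSpace X] {P : Set X}
    {c0 c1 : Fin 2 → X} {r0 r1 : Fin 2 → ℝ} {γ : Fin 2 → ℝ → X} {ρ : Fin 2 → ℝ → ℝ}
    (h : IsMorph 2 P c0 c1 r0 r1 γ ρ) {p q : X} (hp : p ∈ P) (hq : q ∈ P)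
    (hsmall : ∀ t ∈ Icc (0:ℝ) 1, ∀ i, 2 * ρ i t < dist p q)
    (h₀ : p ∈ closedBall (c0 0) (r0 0)) (h₁ : p ∉ closedBall (c0 1) (r0 1)) :
    p ∈ closedBall (γ 0 1) (ρ 0 1) := by
  obtain ⟨hγ, hρ, -, hγ₀, hρ₀, -, hcover⟩ := h
  have cover (x : X) (hx : x ∈ P) (t : ℝ) (ht : t ∈ Icc (0:ℝ) 1) :
      x ∈ closedBall (γ 0 t) (ρ 0 t) ∪ closedBall (γ 1 t) (ρ 1 t) := by
    simpa only [mem_iUnion, Fin.exists_fin_two, mem_union] using hcover t ht hx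
  rw [← hγ₀, ← hρ₀] at h₀ h₁
  exact mem_closedBall_of_isPreconnected isPreconnected_Icc (left_mem_Icc.2 zero_le_one)
    (right_mem_Icc.2 zero_le_one) (hγ 0) (hγ 1) (hρ 0) (hρ 1) (cover p hp) (cover q hq)
    (fun t ht => hsmall t ht 0) (fun t ht => hsmall t ht 1) h₀ h₁

theorem midpoint_pt (a b c d : ℝ) :
    midpoint ℝ (pt a b) (pt c d) = pt ((a + c) / 2) ((b + d) / 2) := by
  rw [midpoint_eq_smul_add]
  ext i
  fin_cases i <;> simp [pt] <;> ring

theorem dist_pt_pt (a b c d : ℝ) : dist (pt a b) (pt c d) = √((a - c) ^ 2 + (b - d) ^ 2) := by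
  simp [EuclideanSpace.dist_eq, pt, Fin.sum_univ_two, Real.dist_eq, sq_abs]

theorem pt_mem_closedBall_sqrt_two_div_two_iff (a b c d : ℝ) :
    pt a b ∈ closedBall (pt c d) (√2 / 2) ↔ (a - c) ^ 2 + (b - d) ^ 2 ≤ 1 / 2 := by
  rw [mem_closedBall, dist_pt_pt, Real.sqrt_le_left (by positivity), div_pow,
    Real.sq_sqrt zero_le_two]
  norm_num

theorem minmax_euclidean_two_center_lower_bound
    (γ : Fin 2 → ℝ → E) (ρ : Fin 2 → ℝ → ℝ)
    (h : IsMorph 2 ({pt 1 0, pt 0 1, pt (-1) 0, pt 0 (-1)} : Set E)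
      ![midpoint ℝ (pt 1 0) (pt 0 1), midpoint ℝ (pt (-1) 0) (pt 0 (-1))]
      ![midpoint ℝ (pt 0 1) (pt (-1) 0), midpoint ℝ (pt 0 (-1)) (pt 1 0)]
      (fun _ => Real.sqrt 2 / 2) (fun _ => Real.sqrt 2 / 2) γ ρ) :
    ∃ t ∈ Set.Icc (0:ℝ) 1, ∃ i, (1:ℝ) ≤ ρ i t := by
  by_contra! hsmall
  have small {p q : E} (hpq : dist p q = 2) (t : ℝ) (ht : t ∈ Icc (0:ℝ) 1) (i : Fin 2) :
      2 * ρ i t < dist p q := by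
    linarith [hsmall t ht i]
  have h₁ := h.mem_closedBall_of_two_mul_lt_dist (p := pt 1 0) (q := pt (-1) 0) (by simp)
    (by simp) (small (by norm_num [dist_pt_pt])) ?_ ?_
  have h₂ := h.mem_closedBall_of_two_mul_lt_dist (p := pt 0 1) (q := pt 0 (-1)) (by simp)
    (by simp) (small (by norm_num [dist_pt_pt])) ?_ ?_
  obtain ⟨-, -, -, -, -, ⟨σ, hγ₁, hρ₁⟩, -⟩ := h
  rw [hγ₁, hρ₁] at h₁ h₂
  revert h₁ h₂
  generalize σ 0 = j
  fin_cases j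
  -- the two cases of `σ 0`, and the four side conditions on `R` left open above
  all_goals
    simp only [Fin.zero_eta, Fin.mk_one, Matrix.cons_val_zero, Matrix.cons_val_one, midpoint_pt,
      pt_mem_closedBall_sqrt_two_div_two_iff]
    norm_num
end
end
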